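/- The Average-Impact value λ satisfies Average-Value: for every game (N,v) with |N| = n, (1/2) Σ_{i∈N} φ̄_i(N,v) = 2^{−n} Σ_{C⊆N} v(C). -/

import Mathlib

open Finset

/-- The marginal contribution of player `i` to coalition `C` in a game with
characteristic function `v`: `MC^C_i(N,v) = v(C ∪ {i}) − v(C)`. -/
noncomputable def MC (v : Finset ℕ → ℝ) (C : Finset ℕ) (i : ℕ) : ℝ :=
  v (insert i C) - v C

/-- The Shapley value of player `i` in the game with player set `N` and
characteristic function `v`. -/
noncomputable def shapley (N : Finset ℕ) (v : Finset ℕ → ℝ) (i : ℕ) : ℝ :=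
  ∑ C ∈ (N.erase i).powerset,
    ((C.card.factorial : ℝ) * ((N.card - C.card - 1).factorial : ℝ) /
      (N.card.factorial : ℝ)) * (v (insert i C) - v C)

/-- The average Shapley value `φ̄_i(N,v) = 2^{1−n} Σ_{C ⊆ N, i ∈ C} φ_i(C,v)`. -/
noncomputable def avgShapley (N : Finset ℕ) (v : Finset ℕ → ℝ) (i : ℕ) : ℝ :=
  (2 / 2 ^ N.card : ℝ) * ∑ C ∈ N.powerset.filter (fun C => i ∈ C), shapley C v i

/-- The synergy value `χ^N_v(C) = v(C) − Σ_{i ∈ C} φ̄_i(N,v)`. -/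
noncomputable def synergyValue (N : Finset ℕ) (v : Finset ℕ → ℝ) (C : Finset ℕ) : ℝ :=
  v C - ∑ i ∈ C, avgShapley N v i

/-- Players `i` and `j` are symmetric in the game `(N,v)`. -/
def IsSymmetric (N : Finset ℕ) (v : Finset ℕ → ℝ) (i j : ℕ) : Prop :=
  i ∈ N ∧ j ∈ N ∧ ∀ C ⊆ N \ {i, j}, v (insert i C) = v (insert j C)

/-- Player `i` is a null player in the game `(N,v)`. -/
def IsNullPlayer (N : Finset ℕ) (v : Finset ℕ → ℝ) (i : ℕ) : Prop :=
  i ∈ N ∧ ∀ C ⊆ N, v (insert i C) = v C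

/-- Player `i` is a dummy player in the game `(N,v)`. -/
def IsDummyPlayer (N : Finset ℕ) (v : Finset ℕ → ℝ) (i : ℕ) : Prop :=
  i ∈ N ∧ ∀ C ⊆ N \ {i}, v (insert i C) = v C + v {i}

/-- A game of dummies: every player is a dummy player. -/
def GameOfDummies (N : Finset ℕ) (v : Finset ℕ → ℝ) : Prop :=
  ∀ i ∈ N, IsDummyPlayer N v i

/-!
The Shapley value is efficient on every subgame, `∑_{i ∈ C} φ_i(C, v) = v C - v ∅`: after
expanding the marginal contributions, every proper nonempty coalition appears with opposite
weights that cancel. Exchanging the sums over players and coalitions in `∑_i φ̄_i(N, v)` therefore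
gives `2^{1-n} ∑_{C ⊆ N} (v C - v ∅)`, and `v ∅ = 0`.
-/

namespace Finset

variable {α M : Type*} [DecidableEq α] [AddCommMonoid M]

theorem sum_sum_powerset_filter_mem_comm (N : Finset α) (g : α → Finset α → M) :
    ∑ i ∈ N, ∑ C ∈ N.powerset.filter (fun C => i ∈ C), g i C
      = ∑ C ∈ N.powerset, ∑ i ∈ C, g i C :=
  sum_comm' fun i C => by
    simp only [mem_filter, mem_powerset]
    exact ⟨fun ⟨_, hCN, hiC⟩ => ⟨hiC, hCN⟩, fun ⟨hiC, hCN⟩ => ⟨hCN hiC, hCN, hiC⟩⟩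

theorem sum_powerset_erase_insert {C : Finset α} {i : α} (hi : i ∈ C) (f : Finset α → M) :
    ∑ S ∈ (C.erase i).powerset, f (insert i S)
      = ∑ T ∈ C.powerset.filter (fun T => i ∈ T), f T :=
  sum_nbij' (insert i) (fun T => T.erase i)
    (fun S hS => by
      simp only [mem_powerset, subset_erase] at hS
      simpa using insert_subset hi hS.1)
    (fun T hT => by
      simp only [mem_filter, mem_powerset] at hT
      simpa using erase_subset_erase i hT.1)
    (fun S hS => erase_insert (subset_erase.mp (mem_powerset.mp hS)).2)
    (fun T hT => insert_erase (mem_filter.mp hT).2)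
    (fun _ _ => rfl)

theorem sum_sum_powerset_erase_insert (C : Finset α) (f : Finset α → M) :
    ∑ i ∈ C, ∑ S ∈ (C.erase i).powerset, f (insert i S)
      = ∑ T ∈ C.powerset, T.card • f T := by
  calc _ = ∑ i ∈ C, ∑ T ∈ C.powerset.filter (fun T => i ∈ T), f T :=
        sum_congr rfl fun i hi => sum_powerset_erase_insert hi f
    _ = ∑ T ∈ C.powerset, ∑ _i ∈ T, f T := sum_sum_powerset_filter_mem_comm C _
    _ = _ := by simp only [sum_const]

theorem sum_sum_powerset_erase (C : Finset α) (f : Finset α → M) :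
    ∑ i ∈ C, ∑ S ∈ (C.erase i).powerset, f S
      = ∑ S ∈ C.powerset, (C.card - S.card) • f S := by
  rw [sum_comm' (t' := C.powerset) (s' := fun S => C \ S) fun i S => by
    simp only [mem_powerset, subset_erase, mem_sdiff]; tauto]
  refine sum_congr rfl fun S hS => ?_
  rw [sum_const, card_sdiff_of_subset (mem_powerset.mp hS)]

end Finset

noncomputable def shapleyWeight (n k : ℕ) : ℝ :=
  (k.factorial : ℝ) * ((n - k - 1).factorial : ℝ) / (n.factorial : ℝ)

/-- In `∑_i φ_i(C, v)`, with `n = |C|`, the value `v T` is gained once for each `i ∈ T` (weight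
`shapleyWeight n (|T| - 1)`) and lost once for each `i ∉ T` (weight `shapleyWeight n |T|`); both
totals are `|T|! (n - |T|)! / n!` unless `T = C` or `T = ∅`. -/
theorem card_mul_shapleyWeight_pred_sub {n k : ℕ} (hk : k ≤ n) :
    k * shapleyWeight n (k - 1) - (n - k : ℕ) * shapleyWeight n k
      = (if k = n then 1 else 0) - (if k = 0 then 1 else 0) := by
  have hn : (n.factorial : ℝ) ≠ 0 := by positivity
  have joining : k * shapleyWeight n (k - 1)
      = if k = 0 then 0 else (k.factorial : ℝ) * ((n - k).factorial : ℝ) / n.factorial := by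
    split_ifs with hk0
    · simp [hk0]
    rw [shapleyWeight, show n - (k - 1) - 1 = n - k by omega, ← Nat.mul_factorial_pred hk0]
    push_cast; ring
  have leaving : (n - k : ℕ) * shapleyWeight n k
      = if k = n then 0 else (k.factorial : ℝ) * ((n - k).factorial : ℝ) / n.factorial := by
    split_ifs with hkn
    · simp [hkn]
    rw [shapleyWeight, ← Nat.mul_factorial_pred (n := n - k) (by omega)]
    push_cast; ring
  rw [joining, leaving]
  split_ifs with h1 h2 h2 <;> subst_vars <;> simp [hn]

theorem shapley_eq_sum_sub (C : Finset ℕ) (v : Finset ℕ → ℝ) (i : ℕ) :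
    shapley C v i = ∑ S ∈ (C.erase i).powerset,
      (shapleyWeight C.card ((insert i S).card - 1) * v (insert i S)
        - shapleyWeight C.card S.card * v S) := by
  refine sum_congr rfl fun S hS => ?_
  rw [card_insert_of_notMem (subset_erase.mp (mem_powerset.mp hS)).2, Nat.add_sub_cancel,
    shapleyWeight, mul_sub]

theorem sum_shapley (C : Finset ℕ) (v : Finset ℕ → ℝ) :
    ∑ i ∈ C, shapley C v i = v C - v ∅ := by
  simp only [shapley_eq_sum_sub, sum_sub_distrib]
  rw [sum_sum_powerset_erase_insert C (fun T => shapleyWeight C.card (T.card - 1) * v T),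
    sum_sum_powerset_erase C (fun S => shapleyWeight C.card S.card * v S), ← sum_sub_distrib]
  calc _ = ∑ T ∈ C.powerset, ((if T = C then 1 else 0) - (if T = ∅ then 1 else 0)) * v T := by
        refine sum_congr rfl fun T hT => ?_
        have hTC := mem_powerset.mp hT
        have card_eq_iff : T.card = C.card ↔ T = C :=
          ⟨fun h => eq_of_subset_of_card_le hTC h.ge, congrArg card⟩
        rw [nsmul_eq_mul, nsmul_eq_mul, ← mul_assoc, ← mul_assoc, ← sub_mul,
          card_mul_shapleyWeight_pred_sub (card_le_card hTC)]
        simp only [card_eq_iff, card_eq_zero]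
    _ = v C - v ∅ := by
      simp only [sub_mul, ite_mul, one_mul, zero_mul, sum_sub_distrib, sum_ite_eq', mem_powerset_self,
        empty_mem_powerset, if_true]

/-- the Average-Impact value `λ^N_v(i) = φ̄_i(N,v)` satisfies
Average-Value (P12): `(1/2) Σ_{i∈N} φ̄_i(N,v) = 2^{−n} Σ_{C⊆N} v(C)`. -/
theorem avgShapley_average_value (N : Finset ℕ) (v : Finset ℕ → ℝ)
    (hv : v ∅ = 0) :
    (1 / 2 : ℝ) * ∑ i ∈ N, avgShapley N v i =
      (1 / 2 ^ N.card : ℝ) * ∑ C ∈ N.powerset, v C := by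
  simp only [avgShapley, ← mul_sum]
  rw [sum_sum_powerset_filter_mem_comm N (fun i C => shapley C v i)]
  simp only [sum_shapley, hv, sub_zero]
  ring
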